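/- For every ρ ≥ 0 and m > 0, j_m(ρ) ≤ K_cl ρ^{4/3} + (9/16) m² K_cl^{-1} ρ^{2/3}, where K_cl = (3/4)(6π²/q)^{1/3}. -/

import Mathlib

/-
Pointwise, AM-GM gives |p| √(|p|² + m²) ≤ |p|² + m²/2, i.e. the relativistic kinetic energy is at
most |p| + m²/(2|p|). Integrating this in polar coordinates over the Fermi ball of radius R bounds
the integral by π R⁴ + π m² R², and R³ = 6π²ρ/q turns the two terms into K_cl ρ^{4/3} and
(9/16) m² K_cl⁻¹ ρ^{2/3}.
-/

open MeasureTheory Real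

noncomputable def jm (q m ρ : ℝ) : ℝ :=
  (q / (2 * π) ^ 3) *
    ∫ p in Metric.ball (0 : EuclideanSpace ℝ (Fin 3)) ((6 * π ^ 2 * ρ / q) ^ ((1:ℝ)/3)),
      Real.sqrt (‖p‖ ^ 2 + m ^ 2)

noncomputable def jmTilde (q m ρ : ℝ) : ℝ :=
  (q / (2 * π) ^ 3) *
    ∫ p in Metric.ball (0 : EuclideanSpace ℝ (Fin 3)) ((6 * π ^ 2 * ρ / q) ^ ((1:ℝ)/3)),
      (Real.sqrt (‖p‖ ^ 2 + m ^ 2))⁻¹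

noncomputable def Kcl (q : ℝ) : ℝ := (3/4) * (6 * π ^ 2 / q) ^ ((1:ℝ)/3)

open Set Metric

section PolarCoordinates

variable {E F : Type*} [NormedAddCommGroup E] [NormedSpace ℝ E] [Nontrivial E]
  [FiniteDimensional ℝ E] [MeasurableSpace E] [BorelSpace E]
  [NormedAddCommGroup F] [NormedSpace ℝ F] (μ : Measure E) [μ.IsAddHaarMeasure]

lemma setIntegral_ball_fun_norm_addHaar (f : ℝ → F) (r : ℝ) :
    ∫ x in ball (0 : E) r, f ‖x‖ ∂μ = Module.finrank ℝ E • μ.real (ball 0 1) •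
      ∫ y in Ioo 0 r, y ^ (Module.finrank ℝ E - 1) • f y := by
  have hind : (ball (0 : E) r).indicator (fun x ↦ f ‖x‖) = fun x ↦ (Iio r).indicator f ‖x‖ := by
    ext x; simp [indicator]
  rw [← integral_indicator measurableSet_ball, hind, integral_fun_norm_addHaar μ,
    ← Ioi_inter_Iio, ← setIntegral_indicator measurableSet_Iio]
  congr 2
  refine setIntegral_congr_fun measurableSet_Ioi fun y _ ↦ ?_
  by_cases hy : y < r <;> simp [hy]

end PolarCoordinates

lemma integral_ball_fin_three_fun_norm (f : ℝ → ℝ) {R : ℝ} (hR : 0 ≤ R) :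
    ∫ p in ball (0 : EuclideanSpace ℝ (Fin 3)) R, f ‖p‖ = 4 * π * ∫ y in 0..R, y ^ 2 * f y := by
  rw [setIntegral_ball_fun_norm_addHaar, intervalIntegral.integral_of_le hR,
    integral_Ioc_eq_integral_Ioo]
  simp only [measureReal_def, EuclideanSpace.volume_ball_fin_three]
  simp [ENNReal.toReal_ofReal (by positivity : 0 ≤ π * 4 / 3)]
  ring

lemma mul_sqrt_sq_add_sq_le (y m : ℝ) : y * √(y ^ 2 + m ^ 2) ≤ y ^ 2 + m ^ 2 / 2 := by
  have hs := sq_sqrt (add_nonneg (sq_nonneg y) (sq_nonneg m))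
  nlinarith [sq_nonneg (y - √(y ^ 2 + m ^ 2))]

lemma integral_ball_sqrt_norm_sq_add_sq_le (m : ℝ) {R : ℝ} (hR : 0 ≤ R) :
    ∫ p in ball (0 : EuclideanSpace ℝ (Fin 3)) R, √(‖p‖ ^ 2 + m ^ 2) ≤
      π * R ^ 4 + π * m ^ 2 * R ^ 2 := by
  rw [integral_ball_fin_three_fun_norm (fun y ↦ √(y ^ 2 + m ^ 2)) hR]
  calc 4 * π * ∫ y in 0..R, y ^ 2 * √(y ^ 2 + m ^ 2)
      ≤ 4 * π * ∫ y in 0..R, (y ^ 3 + m ^ 2 / 2 * y) := by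
        gcongr
        refine intervalIntegral.integral_mono_on hR
          ((by fun_prop : Continuous _).intervalIntegrable _ _)
          ((by fun_prop : Continuous _).intervalIntegrable _ _) fun y hy ↦ ?_
        have := mul_le_mul_of_nonneg_left (mul_sqrt_sq_add_sq_le y m) hy.1
        linarith
    _ = π * R ^ 4 + π * m ^ 2 * R ^ 2 := by
        rw [intervalIntegral.integral_add
          ((by fun_prop : Continuous _).intervalIntegrable _ _)
          ((by fun_prop : Continuous _).intervalIntegrable _ _),
          intervalIntegral.integral_const_mul, integral_pow, integral_id]
        ring

theorem jm_le_Kcl_add_sub_general (q : ℕ) (hq : 1 ≤ q) (m ρ : ℝ) (hρ : 0 ≤ ρ) :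
    jm q m ρ ≤ Kcl q * ρ ^ ((4:ℝ)/3) + (9/16) * m ^ 2 * (Kcl q)⁻¹ * ρ ^ ((2:ℝ)/3) := by
  have hq₀ : (0 : ℝ) < q := by exact_mod_cast hq
  set a := (6 * π ^ 2 / q) ^ ((1:ℝ)/3) with ha
  set r := ρ ^ ((1:ℝ)/3) with hr
  have ha₀ : 0 < a := by positivity
  have ha₃ : a ^ 3 = 6 * π ^ 2 / q := by
    rw [ha, ← rpow_mul_natCast (by positivity)]; norm_num
  have hR : (6 * π ^ 2 * ρ / q) ^ ((1:ℝ)/3) = a * r := by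
    rw [mul_div_right_comm, mul_rpow (by positivity) hρ]
  have hρ₄ : ρ ^ ((4:ℝ)/3) = r ^ 4 := by
    rw [hr, ← rpow_mul_natCast hρ]; norm_num
  have hρ₂ : ρ ^ ((2:ℝ)/3) = r ^ 2 := by
    rw [hr, ← rpow_mul_natCast hρ]; norm_num
  calc jm q m ρ ≤ q / (2 * π) ^ 3 * (π * (a * r) ^ 4 + π * m ^ 2 * (a * r) ^ 2) := by
        rw [jm, hR]
        gcongr
        exact integral_ball_sqrt_norm_sq_add_sq_le m (by positivity)
    _ = _ := by
        have hK : Kcl q = 3 / 4 * a := rfl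
        have hq_eq : (q : ℝ) = 6 * π ^ 2 / a ^ 3 := by rw [ha₃]; field_simp
        rw [hK, hρ₄, hρ₂, hq_eq]
        field_simp
        ring

theorem jm_le_Kcl_add_sub (q : ℕ) (hq : 1 ≤ q) (m ρ : ℝ) (hm : 0 < m) (hρ : 0 ≤ ρ) :
    jm q m ρ ≤ Kcl q * ρ ^ ((4:ℝ)/3) + (9/16) * m ^ 2 * (Kcl q)⁻¹ * ρ ^ ((2:ℝ)/3) :=
  jm_le_Kcl_add_sub_general q hq m ρ hρ
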